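/- Let S ⊆ [0,1] be measurable, η ∈ (0,1), B > 0, J_α ∈ ℤ with |S| ≤ 2^{-J_α+1}, and suppose every point ζ of a subset S' ⊆ S admits a dyadic interval I(ζ) ∋ ζ with |I(ζ)| ≥ η^B 2^{-J_α} and |I(ζ) ∩ S| ≥ η^B |I(ζ)|. Then S' can be covered by a collection 𝒞 of pairwise disjoint dyadic intervals, each of length between η^B 2^{-J_α} and η^{-B} 2^{-J_α+1}, with #𝒞 ≤ 2 η^{-2B}. -/

import Mathlib

/-! Dyadic intervals are nested or disjoint, so the maximal members of the family of dyadic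
intervals of length `≥ ℓ` in which `S` has density `≥ δ` are pairwise disjoint. Every member of
the family lies in a maximal one, since its ancestors in the family are finitely many: their
lengths lie between `ℓ` and `|S| / δ`. By disjointness the masses `|I ∩ S| ≥ δ ℓ` of the maximal
intervals add up to at most `|S|`, so there are at most `|S| / (δ ℓ)` of them. With `δ = η ^ B`,
`ℓ = η ^ B 2 ^ (-Jα)` and `|S| ≤ 2 ^ (-Jα + 1)` this is `2 η ^ (-2B)`. -/

open MeasureTheory Set ENNReal

def IsDyadicInterval (I : Set ℝ) : Prop :=
  ∃ j n : ℤ, I = Ico ((n : ℝ) * 2 ^ (-j)) (((n : ℝ) + 1) * 2 ^ (-j))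

def dyadicIco (j n : ℤ) : Set ℝ := Ico ((n : ℝ) * 2 ^ (-j)) (((n : ℝ) + 1) * 2 ^ (-j))

theorem isDyadicInterval_iff {I : Set ℝ} : IsDyadicInterval I ↔ ∃ j n : ℤ, I = dyadicIco j n :=
  Iff.rfl

theorem mem_dyadicIco_iff {x : ℝ} {j n : ℤ} : x ∈ dyadicIco j n ↔ ⌊x * 2 ^ j⌋ = n := by
  have h2 : (0 : ℝ) < 2 ^ j := by positivity
  rw [dyadicIco, mem_Ico, Int.floor_eq_iff, zpow_neg, ← div_eq_mul_inv, ← div_eq_mul_inv,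
    div_le_iff₀ h2, lt_div_iff₀ h2]

theorem volume_dyadicIco (j n : ℤ) : volume (dyadicIco j n) = ENNReal.ofReal (2 ^ (-j)) := by
  rw [dyadicIco, Real.volume_Ico]
  ring_nf

theorem floor_mul_two_zpow_eq_of_le {x y : ℝ} {j k : ℤ} (hjk : j ≤ k)
    (h : ⌊x * 2 ^ k⌋ = ⌊y * 2 ^ k⌋) : ⌊x * 2 ^ j⌋ = ⌊y * 2 ^ j⌋ := by
  obtain ⟨d, rfl⟩ := Int.exists_add_of_le hjk
  -- passing from scale `j + d` to scale `j` drops the last `d` binary digits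
  have hcoarse (z : ℝ) : ⌊z * 2 ^ j⌋ = ⌊z * 2 ^ (j + d)⌋ / ((2 ^ d : ℕ) : ℤ) := by
    rw [← Int.floor_div_natCast, zpow_add₀ two_ne_zero, zpow_natCast, ← mul_assoc]
    push_cast
    rw [mul_div_cancel_right₀ _ (by positivity)]
  rw [hcoarse x, hcoarse y, h]

theorem dyadicIco_subset_of_le {j k n m : ℤ} (hjk : j ≤ k) {x : ℝ} (hxI : x ∈ dyadicIco j n)
    (hxJ : x ∈ dyadicIco k m) : dyadicIco k m ⊆ dyadicIco j n := by
  intro y hy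
  rw [mem_dyadicIco_iff] at *
  rw [← hxI]
  exact floor_mul_two_zpow_eq_of_le hjk (hy.trans hxJ.symm)

theorem finite_setOf_le_two_zpow_neg_le {a b : ℝ} (ha : 0 < a) :
    {j : ℤ | a ≤ 2 ^ (-j) ∧ (2 : ℝ) ^ (-j) ≤ b}.Finite := by
  obtain ⟨N, hN⟩ := pow_unbounded_of_one_lt b one_lt_two
  obtain ⟨M, hM⟩ := pow_unbounded_of_one_lt a⁻¹ one_lt_two
  refine (finite_Ioo (-(N : ℤ)) M).subset fun j ⟨haj, hjb⟩ ↦ ⟨?_, ?_⟩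
  · have : (2 : ℝ) ^ (-j) < 2 ^ (N : ℤ) := by rw [zpow_natCast]; linarith
    have := (zpow_lt_zpow_iff_right₀ (by norm_num : (1 : ℝ) < 2)).1 this
    omega
  · have : (2 : ℝ) ^ (-(M : ℤ)) < 2 ^ (-j) := by
      rw [zpow_neg, zpow_natCast]
      exact (inv_lt_of_inv_lt₀ ha hM).trans_le haj
    have := (zpow_lt_zpow_iff_right₀ (by norm_num : (1 : ℝ) < 2)).1 this
    omega

namespace IsDyadicInterval

theorem measurableSet {I : Set ℝ} (hI : IsDyadicInterval I) : MeasurableSet I := by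
  obtain ⟨j, n, rfl⟩ := hI
  exact measurableSet_Ico

theorem subset_or_subset_or_disjoint {I J : Set ℝ} (hI : IsDyadicInterval I)
    (hJ : IsDyadicInterval J) : I ⊆ J ∨ J ⊆ I ∨ Disjoint I J := by
  obtain ⟨j, n, rfl⟩ := hI
  obtain ⟨k, m, rfl⟩ := hJ
  by_cases hd : Disjoint (dyadicIco j n) (dyadicIco k m)
  · exact Or.inr (Or.inr hd)
  obtain ⟨x, hxI, hxJ⟩ := not_disjoint_iff.1 hd
  rcases le_total j k with hjk | hkj
  · exact Or.inr (Or.inl (dyadicIco_subset_of_le hjk hxI hxJ))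
  · exact Or.inl (dyadicIco_subset_of_le hkj hxJ hxI)

theorem finite_setOf_mem (x : ℝ) {a b : ℝ} (ha : 0 < a) :
    {J | IsDyadicInterval J ∧ x ∈ J ∧ ENNReal.ofReal a ≤ volume J ∧
      volume J ≤ ENNReal.ofReal b}.Finite := by
  refine ((finite_setOf_le_two_zpow_neg_le (b := b) ha).image
    fun j ↦ dyadicIco j ⌊x * 2 ^ j⌋).subset ?_
  rintro J ⟨hJ, hxJ, haJ, hJb⟩
  obtain ⟨j, n, rfl⟩ := isDyadicInterval_iff.1 hJ
  rw [volume_dyadicIco] at haJ hJb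
  refine ⟨j, ⟨(ENNReal.ofReal_le_ofReal_iff (by positivity)).1 haJ,
    (ENNReal.ofReal_le_ofReal_iff'.1 hJb).resolve_right (not_le.2 (by positivity))⟩, ?_⟩
  simp only [mem_dyadicIco_iff.1 hxJ]

end IsDyadicInterval

theorem Set.pairwise_disjoint_maximal {α : Type*} {T : Set (Set α)}
    (hT : ∀ I ∈ T, ∀ J ∈ T, I ⊆ J ∨ J ⊆ I ∨ Disjoint I J) :
    {I | Maximal (· ∈ T) I}.Pairwise Disjoint := by
  intro I hI J hJ hne
  rcases hT I hI.prop J hJ.prop with hIJ | hJI | hd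
  · exact absurd (hI.eq_of_le hJ.prop hIJ) hne
  · exact absurd (hJ.eq_of_le hI.prop hJI).symm hne
  · exact hd

theorem Set.finite_of_forall_finset_card_mul_le {α : Type*} {𝒜 : Set α} {c m : ℝ≥0∞}
    (hc : c ≠ 0) (hm : m ≠ ∞) (h : ∀ t : Finset α, ↑t ⊆ 𝒜 → t.card * c ≤ m) : 𝒜.Finite := by
  by_contra h𝒜
  obtain ⟨n, hn⟩ := ENNReal.exists_nat_mul_gt hc hm
  obtain ⟨t, ht𝒜, rfl⟩ := Set.Infinite.exists_subset_card_eq h𝒜 n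
  exact (h t ht𝒜).not_gt hn

theorem MeasureTheory.card_mul_le_measure_of_pairwise_disjoint {α : Type*} [MeasurableSpace α]
    {μ : Measure α} {S : Set α} {c : ℝ≥0∞} {t : Finset (Set α)}
    (hm : ∀ A ∈ t, MeasurableSet A) (hd : (t : Set (Set α)).Pairwise Disjoint)
    (hc : ∀ A ∈ t, c ≤ μ (A ∩ S)) : t.card * c ≤ μ S :=
  calc t.card * c = ∑ _A ∈ t, c := by rw [Finset.sum_const, nsmul_eq_mul]
    _ ≤ ∑ A ∈ t, μ.restrict S A :=
      Finset.sum_le_sum fun A hA ↦ (hc A hA).trans_eq (μ.restrict_apply (hm A hA)).symm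
    _ ≤ μ.restrict S univ := sum_measure_le_measure_univ (fun A hA ↦ (hm A hA).nullMeasurableSet)
      fun A hA B hB hne ↦ (hd hA hB hne).aedisjoint
    _ = μ S := Measure.restrict_apply_univ S

section DenseDyadicIntervals

variable {S : Set ℝ} {δ ℓ b : ℝ}

def denseDyadicIntervals (S : Set ℝ) (δ ℓ : ℝ) : Set (Set ℝ) :=
  {I | IsDyadicInterval I ∧ ENNReal.ofReal ℓ ≤ volume I ∧
    ENNReal.ofReal δ * volume I ≤ volume (I ∩ S)}

theorem volume_le_of_mem_denseDyadicIntervals (hδ : 0 < δ) (hS : volume S ≤ ENNReal.ofReal b)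
    {I : Set ℝ} (hI : I ∈ denseDyadicIntervals S δ ℓ) : volume I ≤ ENNReal.ofReal (b / δ) := by
  rw [ENNReal.ofReal_div_of_pos hδ, ENNReal.le_div_iff_mul_le (by simp [hδ]) (by simp), mul_comm]
  exact hI.2.2.trans ((measure_mono inter_subset_right).trans hS)

theorem exists_maximal_denseDyadicIntervals_superset (hδ : 0 < δ) (hℓ : 0 < ℓ)
    (hS : volume S ≤ ENNReal.ofReal b) {I : Set ℝ} (hI : I ∈ denseDyadicIntervals S δ ℓ) :
    ∃ M, I ⊆ M ∧ Maximal (· ∈ denseDyadicIntervals S δ ℓ) M := by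
  obtain ⟨x, hx⟩ : I.Nonempty :=
    nonempty_of_measure_ne_zero ((ENNReal.ofReal_pos.2 hℓ).trans_le hI.2.1).ne'
  have hfin : {J ∈ denseDyadicIntervals S δ ℓ | I ⊆ J}.Finite :=
    (IsDyadicInterval.finite_setOf_mem x hℓ).subset fun J ⟨hJ, hIJ⟩ ↦
      ⟨hJ.1, hIJ hx, hJ.2.1, volume_le_of_mem_denseDyadicIntervals hδ hS hJ⟩
  obtain ⟨M, hIM, hM⟩ := hfin.exists_le_maximal ⟨hI, subset_rfl⟩
  exact ⟨M, hIM, hM.prop.1, fun J hJ hMJ ↦ hM.2 ⟨hJ, hIM.trans hMJ⟩ hMJ⟩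

theorem pairwise_disjoint_maximal_denseDyadicIntervals :
    {I | Maximal (· ∈ denseDyadicIntervals S δ ℓ) I}.Pairwise Disjoint :=
  Set.pairwise_disjoint_maximal fun _ hI _ hJ ↦ hI.1.subset_or_subset_or_disjoint hJ.1

theorem card_mul_le_volume_of_subset_maximal_denseDyadicIntervals {t : Finset (Set ℝ)}
    (ht : ↑t ⊆ {I | Maximal (· ∈ denseDyadicIntervals S δ ℓ) I}) :
    t.card * (ENNReal.ofReal δ * ENNReal.ofReal ℓ) ≤ volume S :=
  card_mul_le_measure_of_pairwise_disjoint (fun _ hI ↦ (ht hI).prop.1.measurableSet)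
    (pairwise_disjoint_maximal_denseDyadicIntervals.mono ht)
    fun _ hI ↦ (mul_le_mul_right (ht hI).prop.2.1 _).trans (ht hI).prop.2.2

theorem finite_maximal_denseDyadicIntervals (hδ : 0 < δ) (hℓ : 0 < ℓ) (hS : volume S ≠ ∞) :
    {I | Maximal (· ∈ denseDyadicIntervals S δ ℓ) I}.Finite :=
  Set.finite_of_forall_finset_card_mul_le (by simp [hδ, hℓ]) hS
    fun _ ↦ card_mul_le_volume_of_subset_maximal_denseDyadicIntervals

end DenseDyadicIntervals

theorem card_le_two_mul_rpow_neg {N : ℕ} {η B : ℝ} {J : ℤ} (hη : 0 < η)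
    (h : (N : ℝ≥0∞) * (ENNReal.ofReal (η ^ B) * ENNReal.ofReal (η ^ B * 2 ^ (-J))) ≤
      ENNReal.ofReal (2 ^ (-J + 1))) :
    (N : ℝ) ≤ 2 * η ^ (-(2 * B)) := by
  have hδ : 0 < η ^ B := Real.rpow_pos_of_pos hη B
  rw [← ENNReal.ofReal_mul hδ.le, ← ENNReal.ofReal_natCast, ← ENNReal.ofReal_mul (by positivity),
    ENNReal.ofReal_le_ofReal_iff (by positivity), zpow_add₀ two_ne_zero, zpow_one] at h
  have hN : (N : ℝ) * (η ^ B) ^ 2 ≤ 2 :=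
    le_of_mul_le_mul_right (by linarith) (by positivity : (0 : ℝ) < 2 ^ (-J))
  rwa [mul_comm 2 B, Real.rpow_neg hη.le, Real.rpow_mul hη.le, Real.rpow_two, ← div_eq_mul_inv,
    le_div_iff₀ (by positivity)]

theorem stmt_19_general (S : Set ℝ)
    (η B : ℝ) (hη0 : 0 < η) (Jα : ℤ)
    (hSvol : volume S ≤ ENNReal.ofReal ((2 : ℝ) ^ (-Jα + 1)))
    (S' : Set ℝ)
    (h : ∀ ζ ∈ S', ∃ I : Set ℝ, IsDyadicInterval I ∧ ζ ∈ I ∧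
      ENNReal.ofReal (η ^ B * (2 : ℝ) ^ (-Jα)) ≤ volume I ∧
      ENNReal.ofReal (η ^ B) * volume I ≤ volume (I ∩ S)) :
    ∃ 𝒞 : Finset (Set ℝ),
      (∀ I ∈ 𝒞, IsDyadicInterval I) ∧
      (∀ I ∈ 𝒞, ∀ I' ∈ 𝒞, I ≠ I' → Disjoint I I') ∧
      S' ⊆ ⋃ I ∈ 𝒞, I ∧
      (∀ I ∈ 𝒞, ENNReal.ofReal (η ^ B * (2 : ℝ) ^ (-Jα)) ≤ volume I ∧
        volume I ≤ ENNReal.ofReal (η ^ (-B) * (2 : ℝ) ^ (-Jα + 1))) ∧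
      (𝒞.card : ℝ) ≤ 2 * η ^ (-(2 * B)) := by
  have hδ : 0 < η ^ B := Real.rpow_pos_of_pos hη0 B
  have hℓ : 0 < η ^ B * (2 : ℝ) ^ (-Jα) := by positivity
  have hfin := finite_maximal_denseDyadicIntervals hδ hℓ (hSvol.trans_lt ofReal_lt_top).ne
  refine ⟨hfin.toFinset, fun I hI ↦ (hfin.mem_toFinset.1 hI).prop.1,
    fun I hI I' hI' ↦ pairwise_disjoint_maximal_denseDyadicIntervals
      (hfin.mem_toFinset.1 hI) (hfin.mem_toFinset.1 hI'),
    fun ζ hζ ↦ ?_, fun I hI ↦ ⟨(hfin.mem_toFinset.1 hI).prop.2.1, ?_⟩, ?_⟩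
  · obtain ⟨I, hI, hζI, hlen, hdens⟩ := h ζ hζ
    obtain ⟨M, hIM, hM⟩ :=
      exists_maximal_denseDyadicIntervals_superset hδ hℓ hSvol ⟨hI, hlen, hdens⟩
    exact mem_biUnion (hfin.mem_toFinset.2 hM) (hIM hζI)
  · rw [Real.rpow_neg hη0.le, ← div_eq_inv_mul]
    exact volume_le_of_mem_denseDyadicIntervals hδ hSvol (hfin.mem_toFinset.1 hI).prop
  · exact card_le_two_mul_rpow_neg hη0
      ((card_mul_le_volume_of_subset_maximal_denseDyadicIntervals (by simp)).trans hSvol)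

/-- the quantitative covering argument of Step 2 (Lemma 2). -/
theorem stmt_19 (S : Set ℝ) (hSm : MeasurableSet S) (hSsub : S ⊆ Icc (0 : ℝ) 1)
    (η B : ℝ) (hη0 : 0 < η) (hη1 : η < 1) (hB : 0 < B) (Jα : ℤ)
    (hSvol : volume S ≤ ENNReal.ofReal ((2 : ℝ) ^ (-Jα + 1)))
    (S' : Set ℝ) (hS' : S' ⊆ S)
    (h : ∀ ζ ∈ S', ∃ I : Set ℝ, IsDyadicInterval I ∧ ζ ∈ I ∧
      ENNReal.ofReal (η ^ B * (2 : ℝ) ^ (-Jα)) ≤ volume I ∧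
      ENNReal.ofReal (η ^ B) * volume I ≤ volume (I ∩ S)) :
    ∃ 𝒞 : Finset (Set ℝ),
      (∀ I ∈ 𝒞, IsDyadicInterval I) ∧
      (∀ I ∈ 𝒞, ∀ I' ∈ 𝒞, I ≠ I' → Disjoint I I') ∧
      S' ⊆ ⋃ I ∈ 𝒞, I ∧
      (∀ I ∈ 𝒞, ENNReal.ofReal (η ^ B * (2 : ℝ) ^ (-Jα)) ≤ volume I ∧
        volume I ≤ ENNReal.ofReal (η ^ (-B) * (2 : ℝ) ^ (-Jα + 1))) ∧
      (𝒞.card : ℝ) ≤ 2 * η ^ (-(2 * B)) :=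
  stmt_19_general S η B hη0 Jα hSvol S' h
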